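/- Let N ≥ 3 be odd, μ > 0, ω > 0. If ε ∈ {-1,+1}^N and a ≥ 0 are such that the N-tuple with components φ_{ω, ε_i a} satisfies the Kirchhoff vertex condition (common value at 0 and Σ_{i=1}^N ψ_i′(0) = 0), then a = 0; hence the resulting state is the N-tuple all of whose components equal φ_{ω,0}, i.e. N half-solitons joined continuously at the vertex. -/

import Mathlib

open Real MeasureTheory

/-- `sech y = 1 / cosh y`. -/
noncomputable def sech (y : ℝ) : ℝ := 1 / Real.cosh y

/-- The half-line soliton profile `φ_{ω,a}(x) = [(μ+1)ω]^{1/(2μ)} sech^{1/μ}(μ√ω (x-a))`. -/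
noncomputable def solProfile (μ ω a : ℝ) (x : ℝ) : ℝ :=
  ((μ + 1) * ω) ^ (1 / (2 * μ)) * sech (μ * Real.sqrt ω * (x - a)) ^ (1 / μ)

/-!
Since `sech` is even, `φ_{ω,-b}(x) = φ_{ω,b}(-x)`, so `φ_{ω,εa}′(0) = ε φ_{ω,a}′(0)` for `ε = ±1`,
and the Kirchhoff condition reads `(Σ ε_i) φ_{ω,a}′(0) = 0`. A sum of an odd number of signs is
odd, hence nonzero, so `φ_{ω,a}′(0) = 0`; as this derivative is a nonzero multiple of
`sinh(μ√ω a)`, it forces `a = 0`.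
-/

theorem Finset.sum_ne_zero_of_forall_eq_one_or_neg_one {ι R : Type*} [Ring R] [CharZero R]
    {s : Finset ι} (hs : Odd s.card) {ε : ι → R} (hε : ∀ i ∈ s, ε i = 1 ∨ ε i = -1) :
    ∑ i ∈ s, ε i ≠ 0 := by
  classical
  set k := (s.filter fun i => ε i = -1).card
  have hsum : ∑ i ∈ s, ε i = (s.card : R) - 2 * k := by
    have hsplit : ∀ i ∈ s, ε i = 1 - 2 * if ε i = -1 then 1 else 0 := by
      intro i hi
      rcases hε i hi with h | h <;> norm_num [h]
    rw [Finset.sum_congr rfl hsplit, Finset.sum_sub_distrib, ← Finset.mul_sum,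
      Finset.sum_boole]
    simp [k]
  rw [hsum, sub_ne_zero]
  intro h
  have : s.card = 2 * k := by exact_mod_cast h
  exact Nat.not_even_iff_odd.mpr hs ⟨k, by omega⟩

theorem solProfile_eq_cosh_rpow (μ ω b x : ℝ) :
    solProfile μ ω b x =
      ((μ + 1) * ω) ^ (1 / (2 * μ)) * cosh (μ * √ω * (x - b)) ^ (-(1 / μ)) := by
  rw [solProfile, sech, one_div (cosh _), inv_rpow (cosh_pos _).le, ← rpow_neg (cosh_pos _).le]

theorem solProfile_neg (μ ω b x : ℝ) : solProfile μ ω (-b) x = solProfile μ ω b (-x) := by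
  rw [solProfile_eq_cosh_rpow, solProfile_eq_cosh_rpow, ← cosh_neg (μ * √ω * (-x - b))]
  ring_nf

theorem deriv_solProfile_neg_at_zero (μ ω b : ℝ) :
    deriv (solProfile μ ω (-b)) 0 = -deriv (solProfile μ ω b) 0 := by
  simp_rw [funext (solProfile_neg μ ω b), deriv_comp_neg, neg_zero]

theorem deriv_solProfile_mul_sign_at_zero (μ ω a ε : ℝ) (hε : ε = 1 ∨ ε = -1) :
    deriv (solProfile μ ω (ε * a)) 0 = ε * deriv (solProfile μ ω a) 0 := by
  rcases hε with rfl | rfl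
  · simp
  · simp [deriv_solProfile_neg_at_zero]

theorem hasDerivAt_solProfile {μ : ℝ} (hμ : μ ≠ 0) (ω b x : ℝ) :
    HasDerivAt (solProfile μ ω b)
      (-(((μ + 1) * ω) ^ (1 / (2 * μ)) * √ω * sinh (μ * √ω * (x - b)) *
        cosh (μ * √ω * (x - b)) ^ (-(1 / μ) - 1))) x := by
  have hlin : HasDerivAt (fun x => μ * √ω * (x - b)) (μ * √ω) x := by
    simpa using ((hasDerivAt_id x).sub_const b).const_mul (μ * √ω)
  have h := (hlin.cosh.rpow_const (p := -(1 / μ)) (Or.inl (cosh_pos _).ne')).const_mul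
    (((μ + 1) * ω) ^ (1 / (2 * μ)))
  rw [funext (solProfile_eq_cosh_rpow μ ω b)]
  refine h.congr_deriv ?_
  field_simp

theorem deriv_solProfile_at_zero_eq_zero_iff {μ ω : ℝ} (hμ : 0 < μ) (hω : 0 < ω) (b : ℝ) :
    deriv (solProfile μ ω b) 0 = 0 ↔ b = 0 := by
  have hK : ((μ + 1) * ω) ^ (1 / (2 * μ)) ≠ 0 := (rpow_pos_of_pos (by positivity) _).ne'
  have hcosh : cosh (μ * √ω * (0 - b)) ^ (-(1 / μ) - 1) ≠ 0 :=
    (rpow_pos_of_pos (cosh_pos _) _).ne'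
  have hscale : μ * √ω ≠ 0 := mul_ne_zero hμ.ne' (sqrt_pos.mpr hω).ne'
  rw [(hasDerivAt_solProfile hμ.ne' ω b 0).deriv, neg_eq_zero, mul_eq_zero, or_iff_left hcosh,
    mul_eq_zero, or_iff_right (mul_ne_zero hK (sqrt_pos.mpr hω).ne'), sinh_eq_zero, mul_eq_zero,
    or_iff_right hscale, zero_sub, neg_eq_zero]

theorem kirchhoff_odd_forces_a_zero (N : ℕ) (hodd : Odd N)
    (μ ω : ℝ) (hμ : 0 < μ) (hω : 0 < ω)
    (ε : Fin N → ℝ) (hε : ∀ i, ε i = 1 ∨ ε i = -1) (a : ℝ)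
    (hkirch : (∑ i : Fin N, deriv (solProfile μ ω (ε i * a)) 0) = 0) :
    a = 0 ∧ ∀ i : Fin N, solProfile μ ω (ε i * a) = solProfile μ ω 0 := by
  have hfactor : (∑ i, ε i) * deriv (solProfile μ ω a) 0 = 0 :=
    calc (∑ i, ε i) * deriv (solProfile μ ω a) 0
        = ∑ i, deriv (solProfile μ ω (ε i * a)) 0 := by
          rw [Finset.sum_mul]
          exact Finset.sum_congr rfl fun i _ =>
            (deriv_solProfile_mul_sign_at_zero μ ω a _ (hε i)).symm
      _ = 0 := hkirch
  have hsigns : ∑ i, ε i ≠ 0 :=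
    Finset.sum_ne_zero_of_forall_eq_one_or_neg_one (by simpa using hodd) fun i _ => hε i
  have ha : a = 0 :=
    (deriv_solProfile_at_zero_eq_zero_iff hμ hω a).mp ((mul_eq_zero.mp hfactor).resolve_left hsigns)
  exact ⟨ha, fun i => by rw [ha, mul_zero]⟩
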